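/- arXiv:2402.10032 — 2 statements merged into one kernel-verified Lean document; each statement's English description precedes it below -/
import Mathlib

section
/- ψ₂ bound for linear functionals: let Y be a centered random vector in ℝ^m such that log 𝔼 exp(Yᵀ V Y − Tr(V)) ≤ ω² ‖V‖_F² for all matrices V ∈ ℝ^{m×m} with ‖V‖_F ≤ 1/ω. Then for any u ∈ ℝ^m, the ψ₂ Orlicz norm of uᵀY satisfies ‖uᵀY‖_{ψ₂}² ≤ (1 + ω)‖u‖²/log 2. -/
open MeasureTheory ProbabilityTheory Real Matrix

/-- Frobenius norm of a real matrix. -/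
noncomputable def frobNorm {m n : Type*} [Fintype m] [Fintype n]
    (A : Matrix m n ℝ) : ℝ :=
  Real.sqrt (∑ i, ∑ j, (A i j) ^ 2)

/-- The ψ₂ Orlicz norm of a real random variable. -/
noncomputable def psi2Norm {Ω : Type*} [MeasureSpace Ω] (ξ : Ω → ℝ) : ℝ :=
  sInf {t : ℝ | 0 < t ∧
    ∫⁻ ω, ENNReal.ofReal (Real.exp ((ξ ω) ^ 2 / t ^ 2)) ∂ℙ ≤ 2}

/-- ψ₂ bound for linear functionals: if `Y` is a centered random vector in
`ℝ^m` with `log 𝔼 exp(Yᵀ V Y − Tr V) ≤ ω² ‖V‖_F²` for all `V` with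
`‖V‖_F ≤ 1/ω`, then `‖uᵀY‖_{ψ₂}² ≤ (1 + ω)‖u‖²/log 2` for all `u ∈ ℝ^m`. -/
theorem psi2_of_quadratic_mgf {Ω : Type*} [MeasureSpace Ω]
    [IsProbabilityMeasure (ℙ : Measure Ω)] {m : ℕ}
    (Y : Ω → (Fin m → ℝ)) (hY : Measurable Y)
    (hint : ∀ j, Integrable (fun ω => Y ω j) ℙ)
    (hcent : ∀ j, ∫ ω, Y ω j ∂ℙ = 0)
    (w : ℝ) (hw : 0 < w)
    (hmgf : ∀ V : Matrix (Fin m) (Fin m) ℝ, frobNorm V ≤ 1 / w →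
      ∫⁻ ω, ENNReal.ofReal
        (Real.exp (Y ω ⬝ᵥ V.mulVec (Y ω) - V.trace)) ∂ℙ
        ≤ ENNReal.ofReal (Real.exp (w ^ 2 * (frobNorm V) ^ 2)))
    (u : Fin m → ℝ) :
    (psi2Norm (fun ω => u ⬝ᵥ Y ω)) ^ 2
      ≤ (1 + w) * (∑ i, (u i) ^ 2) / Real.log 2 := by
  set L := Real.log 2 with hLdef
  have hL0 : 0 < L := Real.log_pos one_lt_two
  have hL1 : L < 1 := by
    have := Real.log_two_lt_d9
    linarith
  set ξ : Ω → ℝ := fun ω => u ⬝ᵥ Y ω with hξ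
  set s := ∑ i, (u i) ^ 2 with hsdef
  have hs0 : 0 ≤ s := Finset.sum_nonneg fun i _ => sq_nonneg _
  have hpsnn : 0 ≤ psi2Norm ξ :=
    Real.sInf_nonneg fun x hx => le_of_lt hx.1
  by_cases hs : s = 0
  · -- u = 0
    have hu : ∀ i, u i = 0 := by
      intro i
      have h2 := (Finset.sum_eq_zero_iff_of_nonneg
        (fun i _ => sq_nonneg (u i))).mp hs i (Finset.mem_univ i)
      exact pow_eq_zero_iff two_ne_zero |>.mp h2
    have hξ0 : ∀ ω, ξ ω = 0 := by
      intro ω; simp [hξ, dotProduct, hu]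
    have hmem : ∀ ε : ℝ, 0 < ε → psi2Norm ξ ≤ ε := by
      intro ε hε
      apply csInf_le ⟨0, fun x hx => le_of_lt hx.1⟩
      refine ⟨hε, ?_⟩
      have : ∀ ω, ENNReal.ofReal (Real.exp ((ξ ω) ^ 2 / ε ^ 2)) = 1 := by
        intro ω; simp [hξ0 ω]
      simp only [this, lintegral_one, measure_univ, mul_one]
      exact one_le_two
    have hp0 : psi2Norm ξ = 0 := by
      by_contra h
      have hpos : 0 < psi2Norm ξ := lt_of_le_of_ne hpsnn (Ne.symm h)
      have := hmem (psi2Norm ξ / 2) (by linarith)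
      linarith
    rw [hp0, hs]
    norm_num
  · have hspos : 0 < s := lt_of_le_of_ne hs0 (Ne.symm hs)
    set t : ℝ := Real.sqrt ((1 + w) * s / L) with htdef
    have ht2 : t ^ 2 = (1 + w) * s / L := Real.sq_sqrt (by positivity)
    have ht0 : 0 < t := Real.sqrt_pos.mpr (by positivity)
    set c : ℝ := L / (1 + w) with hcdef
    have hc0 : 0 < c := by positivity
    have hst : s / t ^ 2 = c := by
      rw [ht2, hcdef]
      field_simp
    set V : Matrix (Fin m) (Fin m) ℝ :=
      Matrix.of (fun i j => u i * u j / t ^ 2) with hVdef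
    have hfV : frobNorm V = c := by
      have key : ∑ i, ∑ j, (V i j) ^ 2 = (s / t ^ 2) ^ 2 := by
        simp only [hVdef, Matrix.of_apply, div_pow, mul_pow,
          ← Finset.sum_div, ← Finset.mul_sum, ← Finset.sum_mul, ← hsdef]
        ring
      rw [frobNorm, key, Real.sqrt_sq (by positivity), hst]
    have htr : V.trace = c := by
      rw [Matrix.trace]
      have : ∑ i, V.diag i = s / t ^ 2 := by
        simp only [hVdef, Matrix.diag, Matrix.of_apply, ← Finset.sum_div, hsdef]
        congr 1
        exact Finset.sum_congr rfl fun i _ => (sq (u i)).symm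
      rw [this, hst]
    have hquad : ∀ x : Fin m → ℝ, x ⬝ᵥ V.mulVec x = (u ⬝ᵥ x) ^ 2 / t ^ 2 := by
      intro x
      rw [eq_div_iff (by positivity : (t : ℝ) ^ 2 ≠ 0)]
      simp only [dotProduct, Matrix.mulVec, dotProduct, hVdef, Matrix.of_apply,
        sq, Finset.sum_mul_sum, Finset.sum_mul, Finset.mul_sum]
      refine Finset.sum_congr rfl fun i _ => ?_
      refine Finset.sum_congr rfl fun j _ => ?_
      field_simp
    have hVsmall : frobNorm V ≤ 1 / w := by
      rw [hfV, hcdef, div_le_div_iff₀ (by linarith) hw]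
      nlinarith
    have hkey := hmgf V hVsmall
    rw [hfV] at hkey
    -- membership of t in the psi2 set
    have hmem : t ∈ {t : ℝ | 0 < t ∧
        ∫⁻ ω, ENNReal.ofReal (Real.exp ((ξ ω) ^ 2 / t ^ 2)) ∂ℙ ≤ 2} := by
      refine ⟨ht0, ?_⟩
      have hsplit : ∀ ω, ENNReal.ofReal (Real.exp ((ξ ω) ^ 2 / t ^ 2))
          = ENNReal.ofReal (Real.exp (Y ω ⬝ᵥ V.mulVec (Y ω) - V.trace))
            * ENNReal.ofReal (Real.exp c) := by
        intro ω
        rw [← ENNReal.ofReal_mul (le_of_lt (Real.exp_pos _)), ← Real.exp_add,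
          hquad, htr]
        congr 2
        ring
      calc ∫⁻ ω, ENNReal.ofReal (Real.exp ((ξ ω) ^ 2 / t ^ 2)) ∂ℙ
          = (∫⁻ ω, ENNReal.ofReal
              (Real.exp (Y ω ⬝ᵥ V.mulVec (Y ω) - V.trace)) ∂ℙ)
            * ENNReal.ofReal (Real.exp c) := by
            simp only [hsplit]
            exact lintegral_mul_const' _ _ ENNReal.ofReal_ne_top
        _ ≤ ENNReal.ofReal (Real.exp (w ^ 2 * c ^ 2))
            * ENNReal.ofReal (Real.exp c) :=
            mul_le_mul_left hkey _
        _ = ENNReal.ofReal (Real.exp (w ^ 2 * c ^ 2 + c)) := by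
            rw [← ENNReal.ofReal_mul (le_of_lt (Real.exp_pos _)), ← Real.exp_add]
        _ ≤ 2 := by
            rw [show (2 : ENNReal) = ENNReal.ofReal 2 by norm_num]
            apply ENNReal.ofReal_le_ofReal
            rw [show (2 : ℝ) = Real.exp L by rw [hLdef, Real.exp_log]; norm_num]
            apply Real.exp_le_exp.mpr
            have hcL : c * (1 + w) = L := by
              rw [hcdef]; field_simp
            nlinarith [sq_nonneg (w * c)]
    have hle : psi2Norm ξ ≤ t :=
      csInf_le ⟨0, fun x hx => le_of_lt hx.1⟩ hmem
    calc (psi2Norm ξ) ^ 2 ≤ t ^ 2 := pow_le_pow_left₀ hpsnn hle 2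
      _ = (1 + w) * s / L := ht2
end

section
/- KL divergence of a restricted shifted Gaussian: let μ be the density of a centered Gaussian measure on ℝ^{p×p} × ℝ^{q×q} given by μ(X,Y) ∝ exp(−(α/2)‖X‖_F² − (β/2)‖Y‖_F²), let Υ ⊂ ℝ^{p×p} × ℝ^{q×q} be a measurable set symmetric about the origin, with Z = ∫_Υ μ ≥ 1/4, and for (U,V) let ρ_{U,V}(X,Y) = μ(X−U, Y−V)·1{(X−U, Y−V) ∈ Υ}/Z. Then KL(ρ_{U,V}, μ) = log(1/Z) + (α‖U‖_F² + β‖V‖_F²)/2 ≤ 2 log 2 + (α‖U‖_F² + β‖V‖_F²)/2. -/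
open MeasureTheory ProbabilityTheory Real

lemma aux_abs_le {b t : ℝ} (hb : 0 < b) : |t| ≤ (1 + 2 / b) * Real.exp (b / 2 * t ^ 2) := by
  have h1 : |t| ≤ 1 + t ^ 2 := by nlinarith [sq_abs t, sq_nonneg (|t| - 1), abs_nonneg t]
  have h2 : b / 2 * t ^ 2 + 1 ≤ Real.exp (b / 2 * t ^ 2) := Real.add_one_le_exp _
  have h3 : (0:ℝ) < 2 / b := by positivity
  have key : (1 + 2 / b) * (b / 2 * t ^ 2 + 1) = b / 2 * t ^ 2 + 1 + t ^ 2 + 2 / b := by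
    field_simp; ring
  have h4 := mul_le_mul_of_nonneg_left h2 (by positivity : (0:ℝ) ≤ 1 + 2 / b)
  nlinarith [sq_nonneg t]

lemma aux_gauss {ι : Type*} [Fintype ι] {b : ℝ} (hb : 0 < b) :
    Integrable (fun x : ι → ℝ => Real.exp (-b * ∑ i, x i ^ 2)) := by
  have h := Integrable.fintype_prod (𝕜 := ℝ) (f := fun (_ : ι) (t : ℝ) => Real.exp (-b * t ^ 2))
    (fun _ => integrable_exp_neg_mul_sq hb)
  refine h.congr (Filter.Eventually.of_forall fun x => ?_)
  show ∏ i, Real.exp (-b * x i ^ 2) = Real.exp (-b * ∑ i, x i ^ 2)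
  rw [Finset.mul_sum, Real.exp_sum]

lemma aux_coord {ι : Type*} [Fintype ι] (i : ι) {b : ℝ} (hb : 0 < b) :
    Integrable (fun x : ι → ℝ => x i * Real.exp (-b * ∑ j, x j ^ 2)) := by
  have hK : (0:ℝ) < 1 + 2 / b := by positivity
  refine Integrable.mono ((aux_gauss (half_pos hb)).const_mul (1 + 2 / b)) ?_
    (Filter.Eventually.of_forall fun x => ?_)
  · exact (((continuous_apply i).mul (Real.continuous_exp.comp
      ((continuous_const.mul (continuous_finset_sum _ fun j _ =>
        (continuous_apply j).pow 2))))).aestronglyMeasurable)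
  · have hS : x i ^ 2 ≤ ∑ j, x j ^ 2 :=
      Finset.single_le_sum (fun j _ => sq_nonneg (x j)) (Finset.mem_univ i)
    rw [Real.norm_eq_abs, Real.norm_eq_abs, abs_mul, abs_of_pos (Real.exp_pos _),
      abs_of_pos (mul_pos hK (Real.exp_pos _))]
    calc |x i| * Real.exp (-b * ∑ j, x j ^ 2)
        ≤ ((1 + 2 / b) * Real.exp (b / 2 * x i ^ 2)) * Real.exp (-b * ∑ j, x j ^ 2) :=
          mul_le_mul_of_nonneg_right (aux_abs_le hb) (Real.exp_pos _).le
      _ = (1 + 2 / b) * Real.exp (b / 2 * x i ^ 2 + -b * ∑ j, x j ^ 2) := by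
          rw [mul_assoc, Real.exp_add]
      _ ≤ (1 + 2 / b) * Real.exp (b / 2 * (∑ j, x j ^ 2) + -b * ∑ j, x j ^ 2) := by
          gcongr
      _ = (1 + 2 / b) * Real.exp (-(b / 2) * ∑ j, x j ^ 2) := by ring_nf

/-- KL divergence of a restricted shifted Gaussian: with
`μ(X,Y) = c·exp(−(α/2)‖X‖_F² − (β/2)‖Y‖_F²)` a probability density on
`ℝ^{p×p} × ℝ^{q×q}` (matrices identified with their vectorizations), `Υ` a
measurable set symmetric about the origin with `Z = ∫_Υ μ ≥ 1/4`, and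
`ρ_{U,V}(X,Y) = μ(X−U, Y−V)·1{(X−U,Y−V) ∈ Υ}/Z`, one has
`KL(ρ_{U,V}, μ) = log(1/Z) + (α‖U‖_F² + β‖V‖_F²)/2
               ≤ 2 log 2 + (α‖U‖_F² + β‖V‖_F²)/2`. -/
theorem kl_restricted_shifted_gaussian {p q : ℕ}
    (α β : ℝ) (hα : 0 < α) (hβ : 0 < β) (c : ℝ) (hc : 0 < c)
    (μd : ((Fin p × Fin p) → ℝ) × ((Fin q × Fin q) → ℝ) → ℝ)
    (hμd : μd = fun z =>
      c * Real.exp (- (α / 2) * (∑ i, z.1 i ^ 2) - (β / 2) * (∑ i, z.2 i ^ 2)))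
    (hprob : ∫ z, μd z = 1)
    (Υ : Set (((Fin p × Fin p) → ℝ) × ((Fin q × Fin q) → ℝ)))
    (hΥmeas : MeasurableSet Υ)
    (hΥsym : ∀ z, z ∈ Υ ↔ -z ∈ Υ)
    (Z : ℝ) (hZ : Z = ∫ z in Υ, μd z) (hZ4 : 1 / 4 ≤ Z)
    (U : (Fin p × Fin p) → ℝ) (V : (Fin q × Fin q) → ℝ)
    (ρd : ((Fin p × Fin p) → ℝ) × ((Fin q × Fin q) → ℝ) → ℝ)
    (hρd : ρd = fun z =>
      Set.indicator Υ (fun w => μd w / Z) (z.1 - U, z.2 - V)) :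
    (∫ z, Real.log (ρd z / μd z) * ρd z)
        = Real.log (1 / Z)
          + (α * (∑ i, U i ^ 2) + β * (∑ i, V i ^ 2)) / 2 ∧
    (∫ z, Real.log (ρd z / μd z) * ρd z)
        ≤ 2 * Real.log 2
          + (α * (∑ i, U i ^ 2) + β * (∑ i, V i ^ 2)) / 2 := by
  have hZpos : 0 < Z := lt_of_lt_of_le (by norm_num) hZ4
  have hZne : Z ≠ 0 := ne_of_gt hZpos
  have hμpos : ∀ z : ((Fin p × Fin p) → ℝ) × ((Fin q × Fin q) → ℝ), 0 < μd z := by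
    intro z; rw [hμd]; positivity
  have hμint : Integrable μd := by
    by_contra h
    rw [integral_undef h] at hprob
    norm_num at hprob
  have hα2 : 0 < α / 2 := half_pos hα
  have hβ2 : 0 < β / 2 := half_pos hβ
  -- split of the density into a product
  have hμsplit : ∀ z : ((Fin p × Fin p) → ℝ) × ((Fin q × Fin q) → ℝ),
      μd z = (c * Real.exp (-(α/2) * ∑ i, z.1 i ^ 2)) * Real.exp (-(β/2) * ∑ i, z.2 i ^ 2) := by
    intro z
    rw [hμd]
    show c * Real.exp (-(α/2) * (∑ i, z.1 i ^ 2) - (β/2) * (∑ i, z.2 i ^ 2)) = _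
    rw [sub_eq_add_neg, Real.exp_add]
    ring_nf
  -- integrability of coordinate * density
  have hI1 : ∀ i, Integrable (fun w : ((Fin p × Fin p) → ℝ) × ((Fin q × Fin q) → ℝ) => w.1 i * μd w) := by
    intro i
    have h := Integrable.mul_prod (L := ℝ)
      (((aux_coord i hα2).const_mul c))
      (aux_gauss (ι := Fin q × Fin q) hβ2)
    rw [show (volume : Measure (((Fin p × Fin p) → ℝ) × ((Fin q × Fin q) → ℝ))) = Measure.prod volume volume from
      Measure.volume_eq_prod _ _]
    refine h.congr (Filter.Eventually.of_forall fun w => ?_)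
    show c * (w.1 i * Real.exp (-(α/2) * ∑ j, w.1 j ^ 2)) * Real.exp (-(β/2) * ∑ j, w.2 j ^ 2)
      = w.1 i * μd w
    rw [hμsplit w]; ring
  have hI2 : ∀ i, Integrable (fun w : ((Fin p × Fin p) → ℝ) × ((Fin q × Fin q) → ℝ) => w.2 i * μd w) := by
    intro i
    have h := Integrable.mul_prod (L := ℝ)
      ((aux_gauss (ι := Fin p × Fin p) hα2).const_mul c)
      (aux_coord i hβ2)
    rw [show (volume : Measure (((Fin p × Fin p) → ℝ) × ((Fin q × Fin q) → ℝ))) = Measure.prod volume volume from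
      Measure.volume_eq_prod _ _]
    refine h.congr (Filter.Eventually.of_forall fun w => ?_)
    show c * Real.exp (-(α/2) * ∑ j, w.1 j ^ 2) * (w.2 i * Real.exp (-(β/2) * ∑ j, w.2 j ^ 2))
      = w.2 i * μd w
    rw [hμsplit w]; ring
  -- the constant
  set C : ℝ := (α * (∑ i, U i ^ 2) + β * (∑ i, V i ^ 2)) / 2 - Real.log Z with hC
  set F : ((Fin p × Fin p) → ℝ) × ((Fin q × Fin q) → ℝ) → ℝ := fun w =>
    (α * (∑ i, w.1 i * U i) + β * (∑ i, w.2 i * V i) + C) * (μd w / Z) with hF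
  -- pointwise identity
  have hpt : ∀ z : ((Fin p × Fin p) → ℝ) × ((Fin q × Fin q) → ℝ),
      Real.log (ρd z / μd z) * ρd z = Set.indicator Υ F (z - (U, V)) := by
    intro z
    have hsub : (z - (U, V) : ((Fin p × Fin p) → ℝ) × ((Fin q × Fin q) → ℝ)) = (z.1 - U, z.2 - V) := rfl
    rw [hρd, hsub]
    beta_reduce
    by_cases hw : ((z.1 - U, z.2 - V) : ((Fin p × Fin p) → ℝ) × ((Fin q × Fin q) → ℝ)) ∈ Υ
    · rw [Set.indicator_of_mem hw, Set.indicator_of_mem hw]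
      have hlog : Real.log ((μd (z.1 - U, z.2 - V) / Z) / μd z)
          = (α * (∑ i, (z.1 i - U i) * U i) + β * (∑ i, (z.2 i - V i) * V i) + C) := by
        rw [Real.log_div (ne_of_gt (div_pos (hμpos _) hZpos)) (ne_of_gt (hμpos z)),
          Real.log_div (ne_of_gt (hμpos _)) hZne, hμd]
        simp only
        rw [Real.log_mul (ne_of_gt hc) (Real.exp_ne_zero _),
          Real.log_mul (ne_of_gt hc) (Real.exp_ne_zero _),
          Real.log_exp, Real.log_exp]
        have e1 : ∑ i, ((z.1 - U) i) ^ 2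
            = ∑ i, z.1 i ^ 2 - 2 * (∑ i, z.1 i * U i) + ∑ i, U i ^ 2 := by
          rw [Finset.mul_sum, ← Finset.sum_sub_distrib, ← Finset.sum_add_distrib]
          exact Finset.sum_congr rfl fun i _ => by simp [Pi.sub_apply]; ring
        have e2 : ∑ i, (z.1 i - U i) * U i = ∑ i, z.1 i * U i - ∑ i, U i ^ 2 := by
          rw [← Finset.sum_sub_distrib]
          exact Finset.sum_congr rfl fun i _ => by ring
        have e3 : ∑ i, ((z.2 - V) i) ^ 2
            = ∑ i, z.2 i ^ 2 - 2 * (∑ i, z.2 i * V i) + ∑ i, V i ^ 2 := by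
          rw [Finset.mul_sum, ← Finset.sum_sub_distrib, ← Finset.sum_add_distrib]
          exact Finset.sum_congr rfl fun i _ => by simp [Pi.sub_apply]; ring
        have e4 : ∑ i, (z.2 i - V i) * V i = ∑ i, z.2 i * V i - ∑ i, V i ^ 2 := by
          rw [← Finset.sum_sub_distrib]
          exact Finset.sum_congr rfl fun i _ => by ring
        rw [e1, e2, e3, e4, hC]
        ring
      rw [hF]
      beta_reduce
      simp only [Pi.sub_apply]
      rw [hlog]
    · rw [Set.indicator_of_notMem hw, Set.indicator_of_notMem hw]
      simp
  -- integrability of the two pieces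
  have hF1int : Integrable (fun w : ((Fin p × Fin p) → ℝ) × ((Fin q × Fin q) → ℝ) =>
      (α * (∑ i, w.1 i * U i) + β * (∑ i, w.2 i * V i)) * (μd w / Z)) := by
    have heq : (fun w : ((Fin p × Fin p) → ℝ) × ((Fin q × Fin q) → ℝ) =>
        (α * (∑ i, w.1 i * U i) + β * (∑ i, w.2 i * V i)) * (μd w / Z))
        = fun w => (∑ i, (α * U i / Z) * (w.1 i * μd w)) + (∑ i, (β * V i / Z) * (w.2 i * μd w)) := by
      funext w
      rw [add_mul, Finset.mul_sum, Finset.mul_sum, Finset.sum_mul, Finset.sum_mul]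
      congr 1
      · exact Finset.sum_congr rfl fun i _ => by field_simp
      · exact Finset.sum_congr rfl fun i _ => by field_simp
    rw [heq]
    exact (integrable_finset_sum _ fun i _ => (hI1 i).const_mul _).add
      (integrable_finset_sum _ fun i _ => (hI2 i).const_mul _)
  have hF2int : Integrable (fun w : ((Fin p × Fin p) → ℝ) × ((Fin q × Fin q) → ℝ) => C * (μd w / Z)) :=
    (hμint.div_const Z).const_mul C
  -- translation invariance
  have htrans : (∫ z, Set.indicator Υ F (z - (U, V))) = ∫ w, Set.indicator Υ F w := by
    rw [show (volume : Measure (((Fin p × Fin p) → ℝ) × ((Fin q × Fin q) → ℝ))) = Measure.prod volume volume from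
      Measure.volume_eq_prod _ _]
    exact integral_sub_right_eq_self (Set.indicator Υ F) (U, V)
  -- odd part integrates to zero
  have hodd : (∫ w, Set.indicator Υ (fun w : ((Fin p × Fin p) → ℝ) × ((Fin q × Fin q) → ℝ) =>
      (α * (∑ i, w.1 i * U i) + β * (∑ i, w.2 i * V i)) * (μd w / Z)) w) = 0 := by
    set g : ((Fin p × Fin p) → ℝ) × ((Fin q × Fin q) → ℝ) → ℝ := Set.indicator Υ (fun w : ((Fin p × Fin p) → ℝ) × ((Fin q × Fin q) → ℝ) =>
      (α * (∑ i, w.1 i * U i) + β * (∑ i, w.2 i * V i)) * (μd w / Z)) with hg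
    have hμeven : ∀ w : ((Fin p × Fin p) → ℝ) × ((Fin q × Fin q) → ℝ), μd (-w) = μd w := by
      intro w
      rw [hμd]
      simp only [Prod.fst_neg, Prod.snd_neg, Pi.neg_apply, neg_sq]
    have hgodd : ∀ w, g (-w) = - g w := by
      intro w
      by_cases hw : w ∈ Υ
      · have hw' : -w ∈ Υ := (hΥsym w).mp hw
        rw [hg, Set.indicator_of_mem hw', Set.indicator_of_mem hw]
        simp only [Prod.fst_neg, Prod.snd_neg, Pi.neg_apply, hμeven]
        rw [show (∑ i, -(w.1 i) * U i) = -∑ i, w.1 i * U i by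
          rw [← Finset.sum_neg_distrib]; exact Finset.sum_congr rfl fun i _ => by ring]
        rw [show (∑ i, -(w.2 i) * V i) = -∑ i, w.2 i * V i by
          rw [← Finset.sum_neg_distrib]; exact Finset.sum_congr rfl fun i _ => by ring]
        ring
      · have hw' : -w ∉ Υ := fun h => hw ((hΥsym w).mpr h)
        rw [hg, Set.indicator_of_notMem hw', Set.indicator_of_notMem hw, neg_zero]
    have hneg : (∫ w, g (-w)) = ∫ w, g w := by
      have hmp : MeasurePreserving (fun z : ((Fin p × Fin p) → ℝ) × ((Fin q × Fin q) → ℝ) => -z) volume volume := by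
        rw [show (volume : Measure (((Fin p × Fin p) → ℝ) × ((Fin q × Fin q) → ℝ))) = Measure.prod volume volume from
          Measure.volume_eq_prod _ _]
        exact (Measure.measurePreserving_neg _).prod (Measure.measurePreserving_neg _)
      exact hmp.integral_comp (MeasurableEquiv.neg (((Fin p × Fin p) → ℝ) × ((Fin q × Fin q) → ℝ))).measurableEmbedding g
    have : (∫ w, g (-w)) = - ∫ w, g w := by
      simp_rw [hgodd]
      exact integral_neg g
    linarith [hneg.symm.trans this]
  -- constant part
  have hconst : (∫ w in Υ, C * (μd w / Z)) = C := by
    have : (fun w : ((Fin p × Fin p) → ℝ) × ((Fin q × Fin q) → ℝ) => C * (μd w / Z)) = fun w => (C / Z) * μd w := by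
      funext w; field_simp
    rw [this, integral_const_mul, ← hZ, div_mul_cancel₀ C hZne]
  -- main computation
  have hmain : (∫ z, Real.log (ρd z / μd z) * ρd z) = C := by
    calc (∫ z, Real.log (ρd z / μd z) * ρd z)
        = ∫ z, Set.indicator Υ F (z - (U, V)) := by
          exact integral_congr_ae (Filter.Eventually.of_forall hpt)
      _ = ∫ w, Set.indicator Υ F w := htrans
      _ = ∫ w in Υ, F w := integral_indicator hΥmeas
      _ = ∫ w in Υ, ((α * (∑ i, w.1 i * U i) + β * (∑ i, w.2 i * V i)) * (μd w / Z)
            + C * (μd w / Z)) := by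
          refine setIntegral_congr_fun hΥmeas fun w _ => ?_
          rw [hF]; ring
      _ = (∫ w in Υ, (α * (∑ i, w.1 i * U i) + β * (∑ i, w.2 i * V i)) * (μd w / Z))
            + ∫ w in Υ, C * (μd w / Z) := by
          exact integral_add (hF1int.integrableOn) (hF2int.integrableOn)
      _ = 0 + C := by
          rw [hconst, ← integral_indicator hΥmeas, hodd]
      _ = C := zero_add C
  have heq : (∫ z, Real.log (ρd z / μd z) * ρd z)
      = Real.log (1 / Z) + (α * (∑ i, U i ^ 2) + β * (∑ i, V i ^ 2)) / 2 := by
    rw [hmain, hC, one_div, Real.log_inv]; ring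
  refine ⟨heq, ?_⟩
  rw [heq]
  have hlog : Real.log (1 / Z) ≤ 2 * Real.log 2 := by
    have h1 : (1 / Z : ℝ) ≤ 4 := by
      rw [div_le_iff₀ hZpos]; linarith
    calc Real.log (1 / Z) ≤ Real.log 4 := Real.log_le_log (by positivity) h1
      _ = 2 * Real.log 2 := by
        rw [show (4:ℝ) = 2 ^ 2 by norm_num, Real.log_pow]; norm_num
  linarith
end
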